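/- arXiv:2103.06458 — 4 statements merged into one kernel-verified Lean document; each statement's English description precedes it below -/
import Mathlib

section
/- For every x = (x₁,x₂,x₃) ∈ ℝ³ with θ := ‖x‖ > 0 and every α ∈ {1,2,3}, the Fréchet derivative at x of the map ℝ³ → M₃(ℝ), y ↦ exp(ŷ), applied to the standard basis vector e_α, equals ((θ cos θ − sin θ)/θ³) x_α x̂ + (sin θ/θ) E_α + ((θ sin θ − 2(1 − cos θ))/θ⁴) x_α x̂² + ((1 − cos θ)/θ²)(E_α x̂ + x̂ E_α). -/
/-!
For `A = x̂` one has `A³ = -‖x‖² A`, so the even and odd parts of the exponential series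
collapse onto `A²` and `A` with the Taylor coefficients of `1 - cos` and `sin`; this is
Rodrigues' formula `exp x̂ = 1 + (sin θ / θ) x̂ + ((1 - cos θ) / θ²) x̂²`. Away from `0` its
coefficients are smooth functions of `θ = ‖x‖`, whose gradient is `x / θ`, and the derivative
follows from the product rule.
-/

open Matrix Real

noncomputable section

/-- `ℝ³` with the Euclidean norm. -/
abbrev E3 := EuclideanSpace ℝ (Fin 3)

/-- Hat map: the skew-symmetric matrix associated to a vector `x ∈ ℝ³`,
with rows `(0, −x₃, x₂)`, `(x₃, 0, −x₁)`, `(−x₂, x₁, 0)`. -/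
def hat (x : E3) : Matrix (Fin 3) (Fin 3) ℝ :=
  !![0, -x 2, x 1; x 2, 0, -x 0; -x 1, x 0, 0]

/-- Standard basis vectors `e_α` of `ℝ³`. -/
def e (α : Fin 3) : E3 := EuclideanSpace.single α 1

attribute [local instance] Matrix.normedAddCommGroup Matrix.normedSpace

open NormedSpace Nat

section Rodrigues

variable {𝔸 : Type*}

theorem pow_two_mul_add_one_of_pow_three [Ring 𝔸] [Algebra ℝ 𝔸] {A : 𝔸} {θ : ℝ}
    (h : A ^ 3 = -(θ ^ 2) • A) (k : ℕ) :
    A ^ (2 * k + 1) = ((-1) ^ k * θ ^ (2 * k)) • A := by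
  induction k with
  | zero => simp
  | succ k ih =>
    rw [show 2 * (k + 1) + 1 = 2 + (2 * k + 1) by ring, pow_add, ih, mul_smul_comm,
      ← pow_succ, h, smul_smul]
    congr 1
    ring

theorem pow_two_mul_add_two_of_pow_three [Ring 𝔸] [Algebra ℝ 𝔸] {A : 𝔸} {θ : ℝ}
    (h : A ^ 3 = -(θ ^ 2) • A) (k : ℕ) :
    A ^ (2 * k + 2) = ((-1) ^ k * θ ^ (2 * k)) • A ^ 2 := by
  rw [pow_succ, pow_two_mul_add_one_of_pow_three h, smul_mul_assoc, ← pow_two]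

theorem Real.hasSum_sin_div {θ : ℝ} (hθ : θ ≠ 0) :
    HasSum (fun k : ℕ => (-1) ^ k * θ ^ (2 * k) / (2 * k + 1)!) (sin θ / θ) := by
  refine ((Real.hasSum_sin θ).div_const θ).congr_fun fun k => ?_
  rw [pow_succ]
  field_simp

theorem Real.hasSum_one_sub_cos_div_sq {θ : ℝ} (hθ : θ ≠ 0) :
    HasSum (fun k : ℕ => (-1) ^ k * θ ^ (2 * k) / (2 * k + 2)!) ((1 - cos θ) / θ ^ 2) := by
  have h := ((hasSum_nat_add_iff' 1).mpr (Real.hasSum_cos θ)).div_const (-θ ^ 2)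
  rw [show (cos θ - _) / -θ ^ 2 = (1 - cos θ) / θ ^ 2 by simp; field_simp; ring] at h
  refine h.congr_fun fun k => ?_
  rw [show 2 * (k + 1) = 2 * k + 2 by ring]
  field_simp
  ring

theorem exp_eq_of_pow_three [Ring 𝔸] [Algebra ℝ 𝔸] [TopologicalSpace 𝔸] [IsTopologicalRing 𝔸]
    [ContinuousSMul ℝ 𝔸] [T2Space 𝔸] {A : 𝔸} {θ : ℝ}
    (hθ : θ ≠ 0) (h : A ^ 3 = -(θ ^ 2) • A) :
    exp A = 1 + (sin θ / θ) • A + ((1 - cos θ) / θ ^ 2) • A ^ 2 := by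
  have hodd : HasSum (fun k : ℕ => ((2 * k + 1)! : ℝ)⁻¹ • A ^ (2 * k + 1)) ((sin θ / θ) • A) := by
    refine ((Real.hasSum_sin_div hθ).smul_const A).congr_fun fun k => ?_
    rw [pow_two_mul_add_one_of_pow_three h, smul_smul]
    ring_nf
  have heven : HasSum (fun k : ℕ => ((2 * k)! : ℝ)⁻¹ • A ^ (2 * k))
      (((1 - cos θ) / θ ^ 2) • A ^ 2 + 1) := by
    refine (hasSum_nat_add_iff' 1).mp ?_
    simp only [Finset.range_one, Finset.sum_singleton, mul_zero, pow_zero, factorial_zero,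
      cast_one, inv_one, one_smul, add_sub_cancel_right]
    refine ((Real.hasSum_one_sub_cos_div_sq hθ).smul_const (A ^ 2)).congr_fun fun k => ?_
    rw [show 2 * (k + 1) = 2 * k + 2 by ring, pow_two_mul_add_two_of_pow_three h, smul_smul]
    ring_nf
  have hexp := HasSum.even_add_odd (f := fun n => (n ! : ℝ)⁻¹ • A ^ n) heven hodd
  rw [congrFun (exp_eq_tsum ℝ) A, hexp.tsum_eq]
  abel

end Rodrigues

section Derivative

variable {E F : Type*} [NormedAddCommGroup E] [InnerProductSpace ℝ E] [NormedAddCommGroup F]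
  [NormedSpace ℝ F]

theorem hasFDerivAt_norm_of_ne_zero {x : E} (hx : x ≠ 0) :
    HasFDerivAt (‖·‖) (‖x‖⁻¹ • innerSL ℝ x) x := by
  have hsqrt := (Real.hasDerivAt_sqrt (pow_ne_zero 2 (norm_ne_zero_iff.mpr hx))).comp_hasFDerivAt
    x (hasStrictFDerivAt_norm_sq x).hasFDerivAt
  simp only [Function.comp_def, Real.sqrt_sq (norm_nonneg _)] at hsqrt
  refine hsqrt.congr_fderiv ?_
  rw [two_nsmul, ← two_smul ℝ, smul_smul, one_div, _root_.mul_inv_rev,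
    inv_mul_cancel_right₀ two_ne_zero]

theorem hasFDerivAt_comp_norm_smul {f : ℝ → ℝ} {f' : ℝ} {g : E → F} {g' : E →L[ℝ] F} {x : E}
    (hx : x ≠ 0) (hf : HasDerivAt f f' ‖x‖) (hg : HasFDerivAt g g' x) :
    HasFDerivAt (fun y => f ‖y‖ • g y)
      (f ‖x‖ • g' + (f' / ‖x‖) • (innerSL ℝ x).smulRight (g x)) x := by
  refine ((hf.comp_hasFDerivAt x (hasFDerivAt_norm_of_ne_zero hx)).fun_smul hg).congr_fderiv ?_
  ext v
  simp [div_eq_mul_inv, mul_smul]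

theorem Real.hasDerivAt_sin_div {t : ℝ} (ht : t ≠ 0) :
    HasDerivAt (fun t => sin t / t) ((t * cos t - sin t) / t ^ 2) t :=
  ((hasDerivAt_sin t).div (hasDerivAt_id' t) ht).congr_deriv (by ring)

theorem Real.hasDerivAt_one_sub_cos_div_sq {t : ℝ} (ht : t ≠ 0) :
    HasDerivAt (fun t => (1 - cos t) / t ^ 2) ((t * sin t - 2 * (1 - cos t)) / t ^ 3) t :=
  (((hasDerivAt_cos t).const_sub 1).div (hasDerivAt_pow 2 t) (pow_ne_zero 2 ht)).congr_deriv
    (by field_simp; ring)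

/-- Stated for any `f` agreeing pointwise with the formula, so that it also applies when the
algebraic operations of `F` are only definitionally equal to those of its normed structure, as for
matrices with the local instance `Matrix.normedAddCommGroup`. -/
theorem fderiv_apply_of_eq_rodrigues (L : E →L[ℝ] F) (B : F →L[ℝ] F →L[ℝ] F) (c : F)
    {f : E → F}
    (hf : ∀ y, f y = c + (sin ‖y‖ / ‖y‖) • L y + ((1 - cos ‖y‖) / ‖y‖ ^ 2) • B (L y) (L y))
    {x : E} (hx : x ≠ 0) (v : E) :
    fderiv ℝ f x v =
      (((‖x‖ * cos ‖x‖ - sin ‖x‖) / ‖x‖ ^ 3) * inner ℝ x v) • L x + (sin ‖x‖ / ‖x‖) • L v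
        + (((‖x‖ * sin ‖x‖ - 2 * (1 - cos ‖x‖)) / ‖x‖ ^ 4) * inner ℝ x v) • B (L x) (L x)
        + ((1 - cos ‖x‖) / ‖x‖ ^ 2) • (B (L v) (L x) + B (L x) (L v)) := by
  have hθ : ‖x‖ ≠ 0 := norm_ne_zero_iff.mpr hx
  have hL := L.hasFDerivAt (x := x)
  have hsin := hasFDerivAt_comp_norm_smul hx (Real.hasDerivAt_sin_div hθ) hL
  have hcos := hasFDerivAt_comp_norm_smul hx (Real.hasDerivAt_one_sub_cos_div_sq hθ)
    (B.hasFDerivAt_of_bilinear hL hL)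
  rw [funext hf, ((hsin.const_add c).fun_add hcos).fderiv]
  simp only [ContinuousLinearMap.precompR_apply, ContinuousLinearMap.compL_apply, smul_add,
    _root_.add_apply, _root_.smul_apply, ContinuousLinearMap.smulRight_apply, coe_innerSL_apply,
    ContinuousLinearMap.comp_apply, ContinuousLinearMap.precompL_apply]
  match_scalars <;> field_simp

end Derivative

section MatrixMul

variable {n : Type*} [Fintype n] [DecidableEq n]

def Matrix.mulCLM : Matrix n n ℝ →L[ℝ] Matrix n n ℝ →L[ℝ] Matrix n n ℝ :=
  LinearMap.toContinuousLinearMap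
    (LinearMap.toContinuousLinearMap.toLinearMap ∘ₗ LinearMap.mul ℝ (Matrix n n ℝ))

@[simp]
theorem Matrix.mulCLM_apply (A B : Matrix n n ℝ) : Matrix.mulCLM A B = A * B := rfl

end MatrixMul

def hatCLM : E3 →L[ℝ] Matrix (Fin 3) (Fin 3) ℝ :=
  LinearMap.toContinuousLinearMap
    { toFun := hat
      map_add' y z := by
        ext i j
        fin_cases i <;> fin_cases j <;> simp [hat] <;> ring
      map_smul' c y := by
        ext i j
        fin_cases i <;> fin_cases j <;> simp [hat] }

@[simp]
theorem hatCLM_apply (y : E3) : hatCLM y = hat y := rfl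

theorem hat_pow_three (y : E3) : hat y ^ 3 = -(‖y‖ ^ 2) • hat y := by
  have hnorm : ‖y‖ ^ 2 = y 0 ^ 2 + y 1 ^ 2 + y 2 ^ 2 := by
    simp [EuclideanSpace.norm_sq_eq, Fin.sum_univ_three]
  rw [pow_succ, pow_two, hnorm]
  ext i j
  fin_cases i <;> fin_cases j <;> simp [hat, Matrix.mul_apply, Fin.sum_univ_three] <;> ring

theorem exp_hat (y : E3) :
    exp (hat y) = 1 + (sin ‖y‖ / ‖y‖) • hat y + ((1 - cos ‖y‖) / ‖y‖ ^ 2) • hat y ^ 2 := by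
  rcases eq_or_ne y 0 with rfl | hy
  · simp [← hatCLM_apply]
  · exact exp_eq_of_pow_three (norm_ne_zero_iff.mpr hy) (hat_pow_three y)

/-- the Fréchet derivative of `y ↦ exp(ŷ)` at `x ≠ 0` in direction `e_α`. -/
theorem stmt6 (x : E3) (hx : 0 < ‖x‖) (α : Fin 3) :
    fderiv ℝ (fun y : E3 => NormedSpace.exp (hat y)) x (e α) =
      (((‖x‖ * Real.cos ‖x‖ - Real.sin ‖x‖) / ‖x‖ ^ 3) * x α) • hat x
        + (Real.sin ‖x‖ / ‖x‖) • hat (e α)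
        + (((‖x‖ * Real.sin ‖x‖ - 2 * (1 - Real.cos ‖x‖)) / ‖x‖ ^ 4) * x α) • hat x ^ 2
        + ((1 - Real.cos ‖x‖) / ‖x‖ ^ 2) • (hat (e α) * hat x + hat x * hat (e α)) := by
  have hexp (y : E3) : exp (hat y) = 1 + (sin ‖y‖ / ‖y‖) • hatCLM y
      + ((1 - cos ‖y‖) / ‖y‖ ^ 2) • Matrix.mulCLM (hatCLM y) (hatCLM y) := by
    rw [exp_hat, hatCLM_apply, Matrix.mulCLM_apply, sq (hat y)]
  have hinner : inner ℝ x (e α) = x α := by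
    simpa [e] using EuclideanSpace.inner_single_right α (1 : ℝ) x
  refine (fderiv_apply_of_eq_rodrigues hatCLM Matrix.mulCLM 1 hexp (norm_pos_iff.mp hx) _).trans ?_
  rw [hinner, sq (hat x)]
  rfl
end
end

section
/- Let x = (x₁,x₂,x₃) ∈ ℝ³ with θ := ‖x‖ and cos θ ≠ 1. Define g_{αβ}(x) := ((2 cos θ − 2 + θ²)/θ⁴) x_α x_β + (2(1 − cos θ)/θ²) δ_{αβ} and g^{βγ}(x) := ((2 cos θ − 2 + θ²)/(2θ²(cos θ − 1))) x_β x_γ + (θ²/(2(1 − cos θ))) δ_{βγ}. Then for all α, γ ∈ {1,2,3}: Σ_{β=1}^{3} g_{αβ}(x) g^{βγ}(x) = δ_{αγ}, i.e., the 3×3 matrix (g^{βγ}(x)) is the inverse of the matrix (g_{αβ}(x)). -/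
open Matrix Real

noncomputable section

attribute [local instance] Matrix.normedAddCommGroup Matrix.normedSpace

/-- The metric tensor `g_{αβ}(x)` of SO(3) in exponential coordinates. -/
def gdown (x : E3) (α β : Fin 3) : ℝ :=
  ((2 * Real.cos ‖x‖ - 2 + ‖x‖ ^ 2) / ‖x‖ ^ 4) * (x α * x β)
    + (2 * (1 - Real.cos ‖x‖) / ‖x‖ ^ 2) * (if α = β then 1 else 0)

/-- The claimed inverse metric `g^{βγ}(x)`. -/
def gup (x : E3) (β γ : Fin 3) : ℝ :=
  ((2 * Real.cos ‖x‖ - 2 + ‖x‖ ^ 2) / (2 * ‖x‖ ^ 2 * (Real.cos ‖x‖ - 1))) * (x β * x γ)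
    + (‖x‖ ^ 2 / (2 * (1 - Real.cos ‖x‖))) * (if β = γ then 1 else 0)

/-!
The metric is a scalar matrix plus a rank-one term, `g = E I + A x xᵀ`, and the product of two
such matrices is again of this form. By Sherman–Morrison its inverse is `E⁻¹ I + B x xᵀ` with
`B = -A / (E (E + A ‖x‖²))`; here `E + A ‖x‖² = 1`, so `B = -A / E`, which is the coefficient
of `g^{βγ}`.
-/

theorem sum_rankOne_add_diagonal_mul {R ι : Type*} [CommRing R] [Fintype ι] [DecidableEq ι]
    (A E B D : R) (a : ι → R) (α γ : ι) :
    ∑ β, (A * (a α * a β) + E * (if α = β then 1 else 0))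
        * (B * (a β * a γ) + D * (if β = γ then 1 else 0))
      = (A * B * ∑ β, a β ^ 2 + A * D + E * B) * (a α * a γ)
        + E * D * (if α = γ then 1 else 0) := by
  simp only [add_mul, mul_add, Finset.sum_add_distrib, mul_ite, ite_mul, mul_one, mul_zero,
    zero_mul, Finset.sum_ite_eq, Finset.sum_ite_eq', Finset.mem_univ, if_true, Finset.mul_sum,
    Finset.sum_mul]
  have summand (β : ι) : A * (a α * a β) * (B * (a β * a γ)) = A * B * a β ^ 2 * (a α * a γ) := by
    ring
  simp only [summand]
  ring

theorem metric_rankOne_coeff_eq_zero {t c : ℝ} (ht : t ≠ 0) (hc : c ≠ 1) :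
    (2 * c - 2 + t ^ 2) / t ^ 4 * ((2 * c - 2 + t ^ 2) / (2 * t ^ 2 * (c - 1))) * t ^ 2
      + (2 * c - 2 + t ^ 2) / t ^ 4 * (t ^ 2 / (2 * (1 - c)))
      + 2 * (1 - c) / t ^ 2 * ((2 * c - 2 + t ^ 2) / (2 * t ^ 2 * (c - 1))) = 0 := by
  have h₁ : 1 - c ≠ 0 := sub_ne_zero.mpr hc.symm
  have h₂ : c - 1 ≠ 0 := sub_ne_zero.mpr hc
  field_simp
  ring

theorem metric_diagonal_coeff_eq_one {t c : ℝ} (ht : t ≠ 0) (hc : c ≠ 1) :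
    2 * (1 - c) / t ^ 2 * (t ^ 2 / (2 * (1 - c))) = 1 := by
  have : 1 - c ≠ 0 := sub_ne_zero.mpr hc.symm
  field_simp

/-- `(g^{βγ})` is the inverse of the metric tensor `(g_{αβ})`. -/
theorem stmt8 (x : E3) (h : Real.cos ‖x‖ ≠ 1) (α γ : Fin 3) :
    (∑ β : Fin 3, gdown x α β * gup x β γ) = if α = γ then 1 else 0 := by
  have hx : ‖x‖ ≠ 0 := fun hx => h (by rw [hx, Real.cos_zero])
  simp only [gdown, gup]
  rw [sum_rankOne_add_diagonal_mul (a := ⇑x), ← EuclideanSpace.real_norm_sq_eq,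
    metric_rankOne_coeff_eq_zero hx h, metric_diagonal_coeff_eq_one hx h, zero_mul, zero_add,
    one_mul]
end
end

section
/- Let u ∈ ℝ³ with θ := ‖u‖ > 0, let T ∈ (0, 2π/θ], and let v : [0,T) → ℝ³ be continuous, differentiable on (0,T), and satisfy for all t ∈ (0,T) and all γ ∈ {1,2,3}: v_γ'(t) + [(2 cos(θt) − 2 + θt · sin(θt))/(2t(1 − cos(θt)))] · (v_γ(t) − (u_γ/θ²)(u·v(t))) = 0. Then u·v(t) = u·v(0) =: C for all t ∈ [0,T), and for all t ∈ (0,T): v(t) = (1/f(t)) ((θ/√2) v(0) − (C/(√2 θ)) u) + (C/θ²) u, where f(t) := √((1 − cos(θt))/t²). -/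
/-!
Write `θ = ‖u‖` and `k(t)` for the coefficient of the equation, so that
`v' = -k (v - (⟪u, v⟫/‖u‖²) u)`. The right-hand side is orthogonal to `u`, hence `⟪u, v⟫ = C` is
conserved, and `w = v - (C/‖u‖²) u` solves `w' = -k w`. The function
`f(t) = √((1 - cos θt)/t²)` is an integrating factor, `f' = k f`, so `f w` is constant; its value
is read off in the limit `t → 0⁺`, where `f(t) → θ/√2`.
-/

open Matrix Real

noncomputable section

attribute [local instance] Matrix.normedAddCommGroup Matrix.normedSpace

open Filter Topology Set
open scoped RealInnerProductSpace

theorem hasDerivAt_piLp {𝕜 ι : Type*} {E : ι → Type*} [NontriviallyNormedField 𝕜]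
    [∀ i, NormedAddCommGroup (E i)] [∀ i, NormedSpace 𝕜 (E i)] [Fintype ι] (p : ENNReal)
    [Fact (1 ≤ p)] {f : 𝕜 → PiLp p E} {f' : PiLp p E} {x : 𝕜} :
    HasDerivAt f f' x ↔ ∀ i, HasDerivAt (fun y => f y i) (f' i) x := by
  simp only [← hasDerivWithinAt_univ, hasDerivWithinAt_iff_hasFDerivWithinAt,
    hasFDerivWithinAt_piLp]
  rfl

theorem ContinuousOn.tendsto_nhdsGT_of_Ico {X : Type*} [TopologicalSpace X] {F : ℝ → X}
    {a b : ℝ} (hc : ContinuousOn F (Ico a b)) (hab : a < b) : Tendsto F (𝓝[>] a) (𝓝 (F a)) :=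
  ((hc a ⟨le_rfl, hab⟩).mono_of_mem_nhdsWithin (Ico_mem_nhdsGT hab)).tendsto

section ZeroDerivative

variable {E : Type*} [NormedAddCommGroup E] [NormedSpace ℝ E]

theorem eq_of_hasDerivAt_zero_of_tendsto_nhdsGT {F : ℝ → E} {a b : ℝ} {L : E}
    (hF : ∀ t ∈ Ioo a b, HasDerivAt F 0 t) (hlim : Tendsto F (𝓝[>] a) (𝓝 L)) :
    ∀ t ∈ Ioo a b, F t = L := by
  intro t ht
  have hconst : ∀ s ∈ Ioo a b, F s = F t := fun s hs =>
    isOpen_Ioo.is_const_of_deriv_eq_zero isPreconnected_Ioo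
      (fun x hx => (hF x hx).differentiableAt.differentiableWithinAt)
      (fun x hx => (hF x hx).deriv) hs ht
  have hev : (fun _ => F t) =ᶠ[𝓝[>] a] F :=
    eventually_of_mem (Ioo_mem_nhdsGT (ht.1.trans ht.2)) fun s hs => (hconst s hs).symm
  exact tendsto_nhds_unique (tendsto_const_nhds.congr' hev) hlim

theorem eq_of_hasDerivAt_zero_of_continuousOn_Ico {F : ℝ → E} {a b : ℝ}
    (hc : ContinuousOn F (Ico a b)) (hF : ∀ t ∈ Ioo a b, HasDerivAt F 0 t) :
    ∀ t ∈ Ico a b, F t = F a := by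
  rintro t ⟨hat, htb⟩
  rcases hat.eq_or_lt with rfl | hat
  · rfl
  exact eq_of_hasDerivAt_zero_of_tendsto_nhdsGT hF (hc.tendsto_nhdsGT_of_Ico (hat.trans htb))
    t ⟨hat, htb⟩

theorem smul_eq_of_hasDerivAt_mul_of_hasDerivAt_neg_smul {f k : ℝ → ℝ} {w : ℝ → E}
    {a b L : ℝ} {w₀ : E}
    (hf : ∀ t ∈ Ioo a b, HasDerivAt f (k t * f t) t)
    (hw : ∀ t ∈ Ioo a b, HasDerivAt w (-k t • w t) t)
    (hfl : Tendsto f (𝓝[>] a) (𝓝 L)) (hwl : Tendsto w (𝓝[>] a) (𝓝 w₀)) :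
    ∀ t ∈ Ioo a b, f t • w t = L • w₀ := by
  refine eq_of_hasDerivAt_zero_of_tendsto_nhdsGT (fun t ht => ?_) (hfl.smul hwl)
  convert (hf t ht).fun_smul (hw t ht) using 1
  module

end ZeroDerivative

section TransportAlongLine

variable {E : Type*} [NormedAddCommGroup E] [InnerProductSpace ℝ E]

theorem inner_sub_inner_div_norm_sq_smul_self (u x : E) :
    ⟪u, x - (⟪u, x⟫ / ‖u‖ ^ 2) • u⟫ = 0 := by
  rcases eq_or_ne u 0 with rfl | hu
  · simp
  rw [inner_sub_right, real_inner_smul_right, real_inner_self_eq_norm_sq,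
    div_mul_cancel₀ _ (by positivity), sub_self]

variable {u : E} {k : ℝ → ℝ} {v : ℝ → E} {a b : ℝ}

theorem inner_eq_of_hasDerivAt_neg_smul_sub (hc : ContinuousOn v (Ico a b))
    (hv : ∀ t ∈ Ioo a b, HasDerivAt v (-k t • (v t - (⟪u, v t⟫ / ‖u‖ ^ 2) • u)) t) :
    ∀ t ∈ Ico a b, ⟪u, v t⟫ = ⟪u, v a⟫ := by
  refine eq_of_hasDerivAt_zero_of_continuousOn_Ico (continuousOn_const.inner hc) fun t ht => ?_
  simpa [real_inner_smul_right, inner_sub_inner_div_norm_sq_smul_self] using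
    (hasDerivAt_const t u).inner ℝ (hv t ht)

theorem eq_of_hasDerivAt_neg_smul_sub {f : ℝ → ℝ} {L : ℝ} (hc : ContinuousOn v (Ico a b))
    (hv : ∀ t ∈ Ioo a b, HasDerivAt v (-k t • (v t - (⟪u, v t⟫ / ‖u‖ ^ 2) • u)) t)
    (hf : ∀ t ∈ Ioo a b, HasDerivAt f (k t * f t) t) (hf0 : ∀ t ∈ Ioo a b, f t ≠ 0)
    (hfl : Tendsto f (𝓝[>] a) (𝓝 L)) :
    ∀ t ∈ Ioo a b, v t = (f t)⁻¹ • L • (v a - (⟪u, v a⟫ / ‖u‖ ^ 2) • u)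
      + (⟪u, v a⟫ / ‖u‖ ^ 2) • u := by
  intro t ht
  set P : E := (⟪u, v a⟫ / ‖u‖ ^ 2) • u
  have hconst := inner_eq_of_hasDerivAt_neg_smul_sub hc hv
  have hw : ∀ s ∈ Ioo a b, HasDerivAt (fun r => v r - P) (-k s • (v s - P)) s := fun s hs => by
    simpa only [hconst s (Ioo_subset_Ico_self hs)] using (hv s hs).sub_const P
  have hwl := (hc.tendsto_nhdsGT_of_Ico (ht.1.trans ht.2)).sub_const P
  rw [← smul_eq_of_hasDerivAt_mul_of_hasDerivAt_neg_smul hf hw hfl hwl t ht, smul_smul,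
    inv_mul_cancel₀ (hf0 t ht), one_smul, sub_add_cancel]

end TransportAlongLine

theorem one_sub_cos_eq_two_mul_sin_sq (x : ℝ) : 1 - cos x = 2 * sin (x / 2) ^ 2 := by
  rw [sin_sq_eq_half_sub, mul_div_cancel₀ x two_ne_zero]
  ring

theorem one_sub_cos_pos_of_mem_Ioo {x : ℝ} (hx : x ∈ Ioo 0 (2 * π)) : 0 < 1 - cos x := by
  have hne : cos x ≠ 1 := fun h =>
    hx.1.ne' ((cos_eq_one_iff_of_lt_of_lt (by linarith [hx.1, pi_pos]) hx.2).1 h)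
  exact sub_pos.2 ((cos_le_one x).lt_of_ne hne)

theorem tendsto_one_sub_cos_mul_div_sq (θ : ℝ) :
    Tendsto (fun t => (1 - cos (θ * t)) / t ^ 2) (𝓝[≠] 0) (𝓝 (θ ^ 2 / 2)) := by
  have hsinc : Tendsto (fun t => θ ^ 2 / 2 * sinc (θ * t / 2) ^ 2) (𝓝 0) (𝓝 (θ ^ 2 / 2)) := by
    simpa using (by fun_prop : Continuous fun t => θ ^ 2 / 2 * sinc (θ * t / 2) ^ 2).tendsto 0
  refine (hsinc.mono_left nhdsWithin_le_nhds).congr' ?_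
  filter_upwards [self_mem_nhdsWithin] with t (ht : t ≠ 0)
  rcases eq_or_ne θ 0 with rfl | hθ
  · simp
  rw [sinc_of_ne_zero (by positivity), one_sub_cos_eq_two_mul_sin_sq]
  field_simp

theorem tendsto_sqrt_one_sub_cos_mul_div_sq {θ : ℝ} (hθ : 0 ≤ θ) :
    Tendsto (fun t => √((1 - cos (θ * t)) / t ^ 2)) (𝓝[≠] 0) (𝓝 (θ / √2)) := by
  simpa [sqrt_div', sqrt_sq hθ] using (tendsto_one_sub_cos_mul_div_sq θ).sqrt

theorem hasDerivAt_sqrt_one_sub_cos_mul_div_sq {θ t : ℝ} (ht : t ≠ 0)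
    (hc : 0 < 1 - cos (θ * t)) :
    HasDerivAt (fun s => √((1 - cos (θ * s)) / s ^ 2))
      ((2 * cos (θ * t) - 2 + θ * t * sin (θ * t)) / (2 * t * (1 - cos (θ * t))) *
        √((1 - cos (θ * t)) / t ^ 2)) t := by
  have hp : 0 < (1 - cos (θ * t)) / t ^ 2 := by positivity
  have h := ((((hasDerivAt_id' t).const_mul θ).cos.const_sub 1).fun_div (hasDerivAt_pow 2 t)
    (pow_ne_zero 2 ht)).sqrt hp.ne'
  convert h using 1
  rw [eq_div_iff (mul_ne_zero two_ne_zero (sqrt_pos.2 hp).ne')]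
  -- with `p = (1 - cos θt)/t²`: `p' = 2 k p`, so `p' / (2 √p) = k √p`
  calc _ = 2 * ((2 * cos (θ * t) - 2 + θ * t * sin (θ * t)) / (2 * t * (1 - cos (θ * t)))) *
        (√((1 - cos (θ * t)) / t ^ 2) * √((1 - cos (θ * t)) / t ^ 2)) := by ring
    _ = _ := by
      rw [mul_self_sqrt hp.le]
      field_simp
      ring

/-- conservation law and explicit solution of the parallel transport
equations along the geodesic `t ↦ tu` in exponential coordinates. -/
theorem stmt10 (u : E3) (hu : 0 < ‖u‖) (T : ℝ) (hT : T ∈ Set.Ioc 0 (2 * π / ‖u‖))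
    (v : ℝ → E3) (hcont : ContinuousOn v (Set.Ico 0 T))
    (hode : ∀ t ∈ Set.Ioo 0 T, ∀ γ : Fin 3,
      HasDerivAt (fun s => v s γ)
        (-(((2 * Real.cos (‖u‖ * t) - 2 + ‖u‖ * t * Real.sin (‖u‖ * t)) /
              (2 * t * (1 - Real.cos (‖u‖ * t)))) *
            (v t γ - u γ / ‖u‖ ^ 2 * (inner ℝ u (v t) : ℝ)))) t) :
    (∀ t ∈ Set.Ico 0 T, (inner ℝ u (v t) : ℝ) = (inner ℝ u (v 0) : ℝ)) ∧
    (∀ t ∈ Set.Ioo 0 T,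
      v t = (1 / Real.sqrt ((1 - Real.cos (‖u‖ * t)) / t ^ 2)) •
            ((‖u‖ / Real.sqrt 2) • v 0
              - ((inner ℝ u (v 0) : ℝ) / (Real.sqrt 2 * ‖u‖)) • u)
          + ((inner ℝ u (v 0) : ℝ) / ‖u‖ ^ 2) • u) := by
  have hv : ∀ t ∈ Ioo 0 T, HasDerivAt v
      (-((2 * cos (‖u‖ * t) - 2 + ‖u‖ * t * sin (‖u‖ * t)) / (2 * t * (1 - cos (‖u‖ * t)))) •
        (v t - (⟪u, v t⟫ / ‖u‖ ^ 2) • u)) t := fun t ht =>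
    (hasDerivAt_piLp 2).2 fun γ => (hode t ht γ).congr_deriv <| by
      simp only [PiLp.smul_apply, PiLp.sub_apply, smul_eq_mul]
      ring
  have hpos : ∀ t ∈ Ioo 0 T, 0 < 1 - cos (‖u‖ * t) := fun t ht =>
    one_sub_cos_pos_of_mem_Ioo ⟨mul_pos hu ht.1, (lt_div_iff₀' hu).1 (ht.2.trans_le hT.2)⟩
  refine ⟨inner_eq_of_hasDerivAt_neg_smul_sub hcont hv, fun t ht => ?_⟩
  rw [eq_of_hasDerivAt_neg_smul_sub hcont hv
    (fun s hs => hasDerivAt_sqrt_one_sub_cos_mul_div_sq hs.1.ne' (hpos s hs))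
    (fun s hs => (sqrt_pos.2 (div_pos (hpos s hs) (pow_pos hs.1 2))).ne')
    ((tendsto_sqrt_one_sub_cos_mul_div_sq hu.le).mono_left (nhdsGT_le_nhdsNE 0)) t ht,
    one_div, smul_sub, smul_smul]
  congr 4
  field_simp
end
end

section
/- Let α ∈ (0, π) and let R⁰ ∈ SO(3) be the rotation about the first coordinate axis by angle α, i.e., the matrix with rows (1,0,0), (0, cos α, −sin α), (0, sin α, cos α). Let x = (x₁,x₂,x₃) and y = (y₁,y₂,y₃) be unit vectors in ℝ³ with y₁ = x₁, and suppose that tr(R⁰ x̂²) = tr(x̂ R⁰ ŷ) and tr(x̂ R⁰ ŷ) + tr(x̂² R⁰ ŷ²) = 0. Then either y = x, or y = (R⁰)ᵀ x. -/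
open Matrix Real

noncomputable section

attribute [local instance] Matrix.normedAddCommGroup Matrix.normedSpace

/-!
Since `x̂ ŷ = y xᵀ - (x ⬝ y) I`, the traces are polynomials in the scalars `x ⬝ y`, `x ⬝ R⁰ y`,
`x ⬝ R⁰ x`, ... . Write `x = (a, v)`, `y = (a, w)` with `|v| = |w|`, and let `Q` be the planar
rotation by `α`. For unit vectors the second constraint factors as
`(|v|² - v ⬝ w) (|v|² - v ⬝ Q w) = 0`. In the plane, `v ⬝ w = |v|² = |w|²` forces `w = v`, and
`(Qᵀ v) ⬝ w = |Qᵀ v|² = |w|²` forces `w = Qᵀ v`; these are the two cases `y = x` and `y = (R⁰)ᵀ x`.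
-/

theorem EuclideanSpace.dotProduct_self_eq_norm_sq {ι : Type*} [Fintype ι] (x : EuclideanSpace ℝ ι) :
    x.ofLp ⬝ᵥ x.ofLp = ‖x‖ ^ 2 := by
  rw [← real_inner_self_eq_norm_sq, EuclideanSpace.inner_eq_star_dotProduct, star_trivial]

theorem eq_and_eq_of_sq_add_sq_eq_of_mul_add_mul_eq {R : Type*} [CommRing R] [LinearOrder R]
    [IsStrictOrderedRing R] {b d q r : R} (hnorm : q ^ 2 + r ^ 2 = b ^ 2 + d ^ 2)
    (hinner : b * q + d * r = b ^ 2 + d ^ 2) : q = b ∧ r = d := by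
  have h : (q - b) ^ 2 + (r - d) ^ 2 = 0 := by linear_combination hnorm - 2 * hinner
  rwa [add_eq_zero_iff_of_nonneg (sq_nonneg _) (sq_nonneg _), sq_eq_zero_iff, sq_eq_zero_iff,
    sub_eq_zero, sub_eq_zero] at h

theorem hat_mul_hat (x y : E3) :
    hat x * hat y = vecMulVec y.ofLp x.ofLp - (x.ofLp ⬝ᵥ y.ofLp) • 1 := by
  ext i j
  fin_cases i <;> fin_cases j <;> simp [hat, vecMulVec, dotProduct, Fin.sum_univ_three] <;> ring

theorem trace_hat_mul_mul_hat (x y : E3) (R : Matrix (Fin 3) (Fin 3) ℝ) :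
    (hat x * R * hat y).trace = y.ofLp ⬝ᵥ R *ᵥ x.ofLp - (x.ofLp ⬝ᵥ y.ofLp) * R.trace := by
  rw [trace_mul_cycle, hat_mul_hat, sub_mul, smul_mul, one_mul, trace_sub, trace_smul, vecMulVec_mul,
    trace_vecMulVec, smul_eq_mul, dotProduct_comm, dotProduct_mulVec, dotProduct_comm x.ofLp]

theorem trace_hat_sq_mul_mul_hat_sq (x y : E3) (R : Matrix (Fin 3) (Fin 3) ℝ) :
    (hat x ^ 2 * R * hat y ^ 2).trace =
      (x.ofLp ⬝ᵥ y.ofLp) * (x.ofLp ⬝ᵥ R *ᵥ y.ofLp) - (y.ofLp ⬝ᵥ y.ofLp) * (x.ofLp ⬝ᵥ R *ᵥ x.ofLp)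
        - (x.ofLp ⬝ᵥ x.ofLp) * (y.ofLp ⬝ᵥ R *ᵥ y.ofLp)
        + (x.ofLp ⬝ᵥ x.ofLp) * (y.ofLp ⬝ᵥ y.ofLp) * R.trace := by
  simp only [sq, hat_mul_hat, sub_mul, mul_sub, Matrix.smul_mul, Matrix.mul_smul, Matrix.one_mul,
    Matrix.mul_one, trace_sub, trace_smul, smul_eq_mul, mul_vecMulVec, ← mulVec_mulVec,
    vecMulVec_mulVec, op_smul_eq_smul, smul_mulVec, trace_vecMulVec, smul_dotProduct]
  rw [trace_mul_comm, mul_vecMulVec, trace_vecMulVec, dotProduct_comm (R *ᵥ x.ofLp),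
    dotProduct_comm (R *ᵥ y.ofLp)]
  ring

theorem stmt15_general (α : ℝ) (x y : E3)
    (hx : ‖x‖ = 1) (hy : ‖y‖ = 1)
    (R0 : Matrix (Fin 3) (Fin 3) ℝ)
    (hR0 : R0 = !![1, 0, 0; 0, Real.cos α, -Real.sin α; 0, Real.sin α, Real.cos α])
    (h1 : y 0 = x 0)
    (h3 : (hat x * R0 * hat y).trace + (hat x ^ 2 * R0 * hat y ^ 2).trace = 0) :
    y = x ∨ y = (R0ᵀ *ᵥ (x : Fin 3 → ℝ) : Fin 3 → ℝ) := by
  have hxx : x.ofLp ⬝ᵥ x.ofLp = 1 := by rw [EuclideanSpace.dotProduct_self_eq_norm_sq, hx, one_pow]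
  have hyy : y.ofLp ⬝ᵥ y.ofLp = 1 := by rw [EuclideanSpace.dotProduct_self_eq_norm_sq, hy, one_pow]
  rw [trace_hat_mul_mul_hat, trace_hat_sq_mul_mul_hat_sq, hxx, hyy, hR0] at h3
  simp only [dotProduct, Fin.sum_univ_three] at hxx hyy
  simp only [dotProduct, mulVec, of_apply, cons_val', cons_val_fin_one, Fin.sum_univ_three,
    cons_val_zero, cons_val_one, cons_val, one_mul, zero_mul, add_zero, zero_add, neg_mul,
    trace_fin_three, mul_one, h1] at h3
  rw [h1] at hyy
  set c := Real.cos α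
  set s := Real.sin α
  have hnorm : y 1 ^ 2 + y 2 ^ 2 = x 1 ^ 2 + x 2 ^ 2 := by linear_combination hyy - hxx
  have hfactor : (x 1 ^ 2 + x 2 ^ 2 - (x 1 * y 1 + x 2 * y 2)) *
      (x 1 ^ 2 + x 2 ^ 2 - (x 1 * (c * y 1 - s * y 2) + x 2 * (s * y 1 + c * y 2))) = 0 := by
    linear_combination h3 - (c * (x 1 * y 1 + x 2 * y 2) - s * (x 1 * y 2 - x 2 * y 1)
      + (x 1 * y 1 + x 2 * y 2) - 1 + x 0 * x 0 - (x 1 * x 1 + x 2 * x 2) - c) * hxx + c * hyy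
  rcases mul_eq_zero.1 hfactor with h | h
  · obtain ⟨hy1, hy2⟩ := eq_and_eq_of_sq_add_sq_eq_of_mul_add_mul_eq hnorm (by linear_combination -h)
    left
    ext i
    fin_cases i <;> assumption
  · obtain ⟨hy1, hy2⟩ := eq_and_eq_of_sq_add_sq_eq_of_mul_add_mul_eq
      (b := c * x 1 + s * x 2) (d := c * x 2 - s * x 1) (q := y 1) (r := y 2)
      (by linear_combination hnorm - (x 1 ^ 2 + x 2 ^ 2) * Real.cos_sq_add_sin_sq α)
      (by linear_combination -h - (x 1 ^ 2 + x 2 ^ 2) * Real.cos_sq_add_sin_sq α)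
    right
    ext i
    fin_cases i <;> simp [hR0, mulVec, dotProduct, Fin.sum_univ_three] <;> linarith

/-- the time-independent constraints force `y = x` or `y = (R⁰)ᵀ x`. -/
theorem stmt15 (α : ℝ) (hα : α ∈ Set.Ioo 0 π) (x y : E3)
    (hx : ‖x‖ = 1) (hy : ‖y‖ = 1)
    (R0 : Matrix (Fin 3) (Fin 3) ℝ)
    (hR0 : R0 = !![1, 0, 0; 0, Real.cos α, -Real.sin α; 0, Real.sin α, Real.cos α])
    (h1 : y 0 = x 0)
    (h2 : (R0 * hat x ^ 2).trace = (hat x * R0 * hat y).trace)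
    (h3 : (hat x * R0 * hat y).trace + (hat x ^ 2 * R0 * hat y ^ 2).trace = 0) :
    y = x ∨ y = (R0ᵀ *ᵥ (x : Fin 3 → ℝ) : Fin 3 → ℝ) :=
  stmt15_general α x y hx hy R0 hR0 h1 h3
end
end
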